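/- Let α be the unique positive root of √(2π)(1−α²)e^{α²/2}Φ(α) = α, and define for t ∈ [0,1) and x < α√(1−t): V₁⁰(t,x) = √(2π(1−t))(1−α²)exp(x²/(2(1−t)))Φ(x/√(1−t)). Then V₁⁰(t,x) > x for all t ∈ [0,1) and x < α√(1−t). -/

import Mathlib

open Real MeasureTheory

noncomputable def stdNormalCDF (y : ℝ) : ℝ :=
  (Real.sqrt (2 * Real.pi))⁻¹ * ∫ u in Set.Iic y, Real.exp (-u ^ 2 / 2)

lemma gauss_integrable : Integrable (fun u : ℝ => Real.exp (-u ^ 2 / 2)) := by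
  have h := integrable_exp_neg_mul_sq (by norm_num : (0:ℝ) < 1/2)
  convert h using 2 with u
  ring_nf

lemma gauss_cont : Continuous (fun u : ℝ => Real.exp (-u ^ 2 / 2)) := by
  continuity

lemma cdf_pos (y : ℝ) : 0 < stdNormalCDF y := by
  unfold stdNormalCDF
  apply mul_pos (by positivity)
  rw [setIntegral_pos_iff_support_of_nonneg_ae]
  · have : (Function.support fun u : ℝ => Real.exp (-u ^ 2 / 2)) = Set.univ := by
      ext u; simp [Function.support, (Real.exp_pos _).ne']
    rw [this]
    simp [Real.volume_Iic]
  · filter_upwards with u using (Real.exp_pos _).le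
  · exact gauss_integrable.integrableOn

lemma cdf_mono {y z : ℝ} (h : y ≤ z) : stdNormalCDF y ≤ stdNormalCDF z := by
  unfold stdNormalCDF
  apply mul_le_mul_of_nonneg_left _ (by positivity)
  apply setIntegral_mono_set gauss_integrable.integrableOn
  · filter_upwards with u using (Real.exp_pos _).le
  · exact HasSubset.Subset.eventuallyLE (Set.Iic_subset_Iic.2 h)

lemma cdf_hasDerivAt (y : ℝ) :
    HasDerivAt stdNormalCDF
      ((Real.sqrt (2 * Real.pi))⁻¹ * Real.exp (-y ^ 2 / 2)) y := by
  have heq : ∀ z : ℝ, stdNormalCDF z =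
      (Real.sqrt (2 * Real.pi))⁻¹ *
        ((∫ u in Set.Iic (0:ℝ), Real.exp (-u ^ 2 / 2)) +
          ∫ u in (0:ℝ)..z, Real.exp (-u ^ 2 / 2)) := by
    intro z
    unfold stdNormalCDF
    rw [← intervalIntegral.integral_Iic_sub_Iic gauss_integrable.integrableOn
      gauss_integrable.integrableOn]
    ring
  have h1 : HasDerivAt (fun z => ∫ u in (0:ℝ)..z, Real.exp (-u ^ 2 / 2))
      (Real.exp (-y ^ 2 / 2)) y := by
    exact intervalIntegral.integral_hasDerivAt_right
      (gauss_integrable.intervalIntegrable)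
      gauss_cont.aestronglyMeasurable.stronglyMeasurableAtFilter
      gauss_cont.continuousAt
  have h2 := ((h1.const_add (∫ u in Set.Iic (0:ℝ), Real.exp (-u ^ 2 / 2))).const_mul
    ((Real.sqrt (2 * Real.pi))⁻¹))
  refine h2.congr_of_eventuallyEq ?_
  filter_upwards with z using (heq z)

lemma alpha_lt_one {α : ℝ} (hpos : 0 < α)
    (hroot : Real.sqrt (2 * Real.pi) * (1 - α ^ 2) * Real.exp (α ^ 2 / 2) * stdNormalCDF α = α) :
    α < 1 := by
  by_contra h
  push_neg at h
  have h1 : 1 - α ^ 2 ≤ 0 := by nlinarith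
  have h2 : Real.sqrt (2 * Real.pi) * (1 - α ^ 2) * Real.exp (α ^ 2 / 2) * stdNormalCDF α ≤ 0 := by
    have hs : 0 < Real.sqrt (2 * Real.pi) := by positivity
    have ha := mul_nonpos_of_nonneg_of_nonpos hs.le h1
    have hb := mul_nonpos_of_nonpos_of_nonneg ha (Real.exp_pos (α ^ 2 / 2)).le
    exact mul_nonpos_of_nonpos_of_nonneg hb (cdf_pos α).le
  rw [hroot] at h2
  linarith

/-- Key one-dimensional inequality: `y < √(2π)(1-α²)e^{y²/2}Φ(y)` for `y < α`. -/
lemma key_ineq {α : ℝ} (hpos : 0 < α)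
    (hroot : Real.sqrt (2 * Real.pi) * (1 - α ^ 2) * Real.exp (α ^ 2 / 2) * stdNormalCDF α = α)
    {y : ℝ} (hy : y < α) :
    y < Real.sqrt (2 * Real.pi) * (1 - α ^ 2) * Real.exp (y ^ 2 / 2) * stdNormalCDF y := by
  have hα1 : α < 1 := alpha_lt_one hpos hroot
  have hα2 : 0 < 1 - α ^ 2 := by nlinarith
  have hs : 0 < Real.sqrt (2 * Real.pi) := by positivity
  set f : ℝ → ℝ := fun z =>
    Real.sqrt (2 * Real.pi) * (1 - α ^ 2) * Real.exp (z ^ 2 / 2) * stdNormalCDF z - z with hf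
  -- suffices f y > 0
  rcases le_or_gt y 0 with h0 | h0
  · have : 0 < Real.sqrt (2 * Real.pi) * (1 - α ^ 2) * Real.exp (y ^ 2 / 2) * stdNormalCDF y := by
      have := cdf_pos y
      positivity
    linarith
  -- derivative of f
  have hderiv : ∀ z : ℝ, HasDerivAt f
      (Real.sqrt (2 * Real.pi) * (1 - α ^ 2) * (z * Real.exp (z ^ 2 / 2)) * stdNormalCDF z
        - α ^ 2) z := by
    intro z
    have he : HasDerivAt (fun w : ℝ => Real.exp (w ^ 2 / 2)) (z * Real.exp (z ^ 2 / 2)) z := by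
      have hp : HasDerivAt (fun w : ℝ => w ^ 2 / 2) z z := by
        have := (hasDerivAt_pow 2 z).div_const 2
        simpa using this
      have := hp.exp
      simpa [mul_comm] using this
    have hc := cdf_hasDerivAt z
    have hmul := he.mul hc
    have hmul2 := hmul.const_mul (Real.sqrt (2 * Real.pi) * (1 - α ^ 2))
    have hfinal := hmul2.sub (hasDerivAt_id z)
    have harr : Real.sqrt (2 * Real.pi) * (1 - α ^ 2) *
        (z * Real.exp (z ^ 2 / 2) * stdNormalCDF z +
          Real.exp (z ^ 2 / 2) * ((Real.sqrt (2 * Real.pi))⁻¹ * Real.exp (-z ^ 2 / 2))) - 1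
        = Real.sqrt (2 * Real.pi) * (1 - α ^ 2) * (z * Real.exp (z ^ 2 / 2)) * stdNormalCDF z
        - α ^ 2 := by
      have hexp : Real.exp (z ^ 2 / 2) * Real.exp (-z ^ 2 / 2) = 1 := by
        rw [← Real.exp_add]; ring_nf; exact Real.exp_zero
      have hinv : Real.sqrt (2 * Real.pi) * (Real.sqrt (2 * Real.pi))⁻¹ = 1 :=
        mul_inv_cancel₀ hs.ne'
      have h3 : Real.sqrt (2 * Real.pi) * (1 - α ^ 2) *
          (Real.exp (z ^ 2 / 2) * ((Real.sqrt (2 * Real.pi))⁻¹ * Real.exp (-z ^ 2 / 2)))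
          = 1 - α ^ 2 := by
        have h4 : Real.sqrt (2 * Real.pi) * (1 - α ^ 2) *
            (Real.exp (z ^ 2 / 2) * ((Real.sqrt (2 * Real.pi))⁻¹ * Real.exp (-z ^ 2 / 2)))
            = (1 - α ^ 2) * (Real.sqrt (2 * Real.pi) * (Real.sqrt (2 * Real.pi))⁻¹)
              * (Real.exp (z ^ 2 / 2) * Real.exp (-z ^ 2 / 2)) := by ring
        rw [h4, hinv, hexp]; ring
      linear_combination h3
    rw [← harr]
    apply hfinal.congr_of_eventuallyEq
    filter_upwards with w
    simp only [hf, id, Pi.sub_apply, Pi.mul_apply]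
    ring
  -- f strictly decreasing on [0, α]
  have hanti : StrictAntiOn f (Set.Icc 0 α) := by
    apply strictAntiOn_of_deriv_neg (convex_Icc 0 α)
    · exact fun z _ => ((hderiv z).continuousAt).continuousWithinAt
    · intro z hz
      rw [interior_Icc] at hz
      rw [(hderiv z).deriv]
      -- need: √(2π)(1-α²) z e^{z²/2} Φ(z) < α²
      have hz0 : 0 < z := hz.1
      have hzα : z < α := hz.2
      have hΦ : stdNormalCDF z ≤ stdNormalCDF α := cdf_mono hzα.le
      have hΦz : 0 < stdNormalCDF z := cdf_pos z
      have hez : Real.exp (z ^ 2 / 2) < Real.exp (α ^ 2 / 2) := by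
        apply Real.exp_lt_exp.2; nlinarith
      have he0 : 0 < Real.exp (z ^ 2 / 2) := Real.exp_pos _
      have heα : 0 < Real.exp (α ^ 2 / 2) := Real.exp_pos _
      have h1 : z * Real.exp (z ^ 2 / 2) < α * Real.exp (α ^ 2 / 2) := by
        nlinarith [mul_pos hpos (sub_pos.2 hez), mul_pos (sub_pos.2 hzα) he0]
      have hstep : z * Real.exp (z ^ 2 / 2) * stdNormalCDF z
          < α * Real.exp (α ^ 2 / 2) * stdNormalCDF α :=
        lt_of_lt_of_le (mul_lt_mul_of_pos_right h1 hΦz)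
          (mul_le_mul_of_nonneg_left hΦ (by positivity))
      have hlt : Real.sqrt (2 * Real.pi) * (1 - α ^ 2) * (z * Real.exp (z ^ 2 / 2))
            * stdNormalCDF z
          < Real.sqrt (2 * Real.pi) * (1 - α ^ 2) * (α * Real.exp (α ^ 2 / 2))
            * stdNormalCDF α := by
        have h := mul_lt_mul_of_pos_left hstep (mul_pos hs hα2)
        calc Real.sqrt (2 * Real.pi) * (1 - α ^ 2) * (z * Real.exp (z ^ 2 / 2)) * stdNormalCDF z
            = Real.sqrt (2 * Real.pi) * (1 - α ^ 2)
              * (z * Real.exp (z ^ 2 / 2) * stdNormalCDF z) := by ring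
          _ < Real.sqrt (2 * Real.pi) * (1 - α ^ 2)
              * (α * Real.exp (α ^ 2 / 2) * stdNormalCDF α) := h
          _ = Real.sqrt (2 * Real.pi) * (1 - α ^ 2) * (α * Real.exp (α ^ 2 / 2))
              * stdNormalCDF α := by ring
      have hroot2 : Real.sqrt (2 * Real.pi) * (1 - α ^ 2) * (α * Real.exp (α ^ 2 / 2))
          * stdNormalCDF α = α ^ 2 := by
        linear_combination α * hroot
      rw [hroot2] at hlt
      linarith
  have hfα : f α = 0 := by
    simp only [hf]
    rw [hroot]
    ring
  have := hanti ⟨h0.le, hy.le⟩ ⟨hpos.le, le_refl α⟩ hy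
  rw [hfα] at this
  simp only [hf] at this
  linarith

theorem stmt_11 (α : ℝ) (hpos : 0 < α)
    (hroot : Real.sqrt (2 * Real.pi) * (1 - α ^ 2) * Real.exp (α ^ 2 / 2) * stdNormalCDF α = α)
    (t x : ℝ) (ht : t ∈ Set.Ico (0:ℝ) 1) (hx : x < α * Real.sqrt (1 - t)) :
    x < Real.sqrt (2 * Real.pi * (1 - t)) * (1 - α ^ 2)
        * Real.exp (x ^ 2 / (2 * (1 - t))) * stdNormalCDF (x / Real.sqrt (1 - t)) := by
  obtain ⟨ht0, ht1⟩ := ht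
  have h1t : 0 < 1 - t := by linarith
  set s := Real.sqrt (1 - t) with hsdef
  have hs0 : 0 < s := Real.sqrt_pos.2 h1t
  have hs2 : s ^ 2 = 1 - t := Real.sq_sqrt h1t.le
  set y := x / s with hydef
  have hxy : x = s * y := by rw [hydef]; field_simp
  have hyα : y < α := by
    rw [hydef, div_lt_iff₀ hs0]
    linarith [hx, mul_comm α s]
  have hkey := key_ineq hpos hroot hyα
  have hsqrt : Real.sqrt (2 * Real.pi * (1 - t)) = Real.sqrt (2 * Real.pi) * s := by
    rw [hsdef, ← Real.sqrt_mul (by positivity)]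
  have hexp : x ^ 2 / (2 * (1 - t)) = y ^ 2 / 2 := by
    rw [hxy]; rw [← hs2]; field_simp
  rw [hsqrt, hexp, hxy]
  calc s * y < s * (Real.sqrt (2 * Real.pi) * (1 - α ^ 2) * Real.exp (y ^ 2 / 2)
        * stdNormalCDF y) := by
        exact mul_lt_mul_of_pos_left hkey hs0
    _ = Real.sqrt (2 * Real.pi) * s * (1 - α ^ 2) * Real.exp (y ^ 2 / 2) * stdNormalCDF y := by
        ring
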